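/- arXiv:2408.15951 — 3 statements merged into one kernel-verified Lean document; each statement's English description precedes it below -/
import Mathlib

section
/- If H is an isometric subgraph of a connected graph G and X is an outer general position set of G, then X ∩ V(H) is an outer general position set of H. -/
open SimpleGraph

/-- `u` and `v` are `X`-positionable in `G`: every shortest `u,v`-path meets `X`
only possibly in its endpoints. -/
def Positionable {V : Type*} (G : SimpleGraph V) (X : Set V) (u v : V) : Prop :=
  ∀ p : G.Walk u v, p.length = G.dist u v → ∀ w ∈ p.support, w ∈ X → w = u ∨ w = v

/-- `X` is a general position set of `G`. -/
def IsGPSet {V : Type*} (G : SimpleGraph V) (X : Set V) : Prop :=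
  ∀ u ∈ X, ∀ v ∈ X, Positionable G X u v

/-- `X` is an outer general position set of `G`. -/
def IsOuterGPSet {V : Type*} (G : SimpleGraph V) (X : Set V) : Prop :=
  IsGPSet G X ∧ ∀ u ∈ X, ∀ v ∉ X, Positionable G X u v

/-- `X` is a dual general position set of `G`. -/
def IsDualGPSet {V : Type*} (G : SimpleGraph V) (X : Set V) : Prop :=
  IsGPSet G X ∧ ∀ u ∉ X, ∀ v ∉ X, Positionable G X u v

/-- `X` is a total general position set of `G`. -/
def IsTotalGPSet {V : Type*} (G : SimpleGraph V) (X : Set V) : Prop :=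
  ∀ u v : V, Positionable G X u v

/-- The outer general position number. -/
noncomputable def gpo {V : Type*} (G : SimpleGraph V) : ℕ :=
  sSup {n | ∃ X : Set V, IsOuterGPSet G X ∧ X.ncard = n}

/-- The dual general position number. -/
noncomputable def gpd {V : Type*} (G : SimpleGraph V) : ℕ :=
  sSup {n | ∃ X : Set V, IsDualGPSet G X ∧ X.ncard = n}

/-- The total general position number. -/
noncomputable def gpt {V : Type*} (G : SimpleGraph V) : ℕ :=
  sSup {n | ∃ X : Set V, IsTotalGPSet G X ∧ X.ncard = n}

/-- The closed neighborhood `N[u]`. -/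
def closedNbhd {V : Type*} (G : SimpleGraph V) (u : V) : Set V :=
  insert u (G.neighborSet u)

/-- A vertex is simplicial if its closed neighborhood induces a complete subgraph. -/
def IsSimplicial {V : Type*} (G : SimpleGraph V) (u : V) : Prop :=
  ∀ x ∈ closedNbhd G u, ∀ y ∈ closedNbhd G u, x ≠ y → G.Adj x y

/-- `s(G)`, the number of simplicial vertices. -/
noncomputable def simplicialNum {V : Type*} (G : SimpleGraph V) : ℕ :=
  {u | IsSimplicial G u}.ncard

/-- `u` is maximally distant from `v`. -/
def MaxDistant {V : Type*} (G : SimpleGraph V) (u v : V) : Prop :=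
  ∀ w, G.Adj u w → G.dist v w ≤ G.dist v u

/-- `u` and `v` are mutually maximally distant. -/
def MMD {V : Type*} (G : SimpleGraph V) (u v : V) : Prop :=
  MaxDistant G u v ∧ MaxDistant G v u

/-- `b(G)`, the number of boundary vertices (vertices MMD with some vertex). -/
noncomputable def boundaryNum {V : Type*} (G : SimpleGraph V) : ℕ :=
  {u | ∃ v, MMD G u v}.ncard

/-- `u` and `v` are true twins: distinct with equal closed neighborhoods. -/
def TrueTwins {V : Type*} (G : SimpleGraph V) (u v : V) : Prop :=
  u ≠ v ∧ closedNbhd G u = closedNbhd G v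

/-- The independence number of `G`. -/
noncomputable def indepNum {V : Type*} (G : SimpleGraph V) : ℕ :=
  sSup {n | ∃ S : Set V, (∀ u ∈ S, ∀ v ∈ S, u ≠ v → ¬ G.Adj u v) ∧ S.ncard = n}

/-- The `k`-independence number `α_k(G)`. -/
noncomputable def kIndepNum {V : Type*} (G : SimpleGraph V) (k : ℕ) : ℕ :=
  sSup {n | ∃ S : Set V, (∀ u ∈ S, ∀ v ∈ S, u ≠ v → k < G.dist u v) ∧ S.ncard = n}

/-- `G` has diameter `k`. -/
def HasDiam {V : Type*} (G : SimpleGraph V) (k : ℕ) : Prop :=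
  (∀ u v, G.dist u v ≤ k) ∧ ∃ u v, G.dist u v = k

/-- The strong product `G ⊠ H`. -/
def StrongProd {α β : Type*} (G : SimpleGraph α) (H : SimpleGraph β) : SimpleGraph (α × β) where
  Adj x y := (x.1 = y.1 ∧ H.Adj x.2 y.2) ∨ (G.Adj x.1 y.1 ∧ x.2 = y.2) ∨
    (G.Adj x.1 y.1 ∧ H.Adj x.2 y.2)
  symm := ⟨fun x y h => by
    rcases h with ⟨h1, h2⟩ | ⟨h1, h2⟩ | ⟨h1, h2⟩
    · exact Or.inl ⟨h1.symm, h2.symm⟩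
    · exact Or.inr (Or.inl ⟨h1.symm, h2.symm⟩)
    · exact Or.inr (Or.inr ⟨h1.symm, h2.symm⟩)⟩
  loopless := ⟨fun x h => by
    rcases h with ⟨_, h2⟩ | ⟨h1, _⟩ | ⟨h1, _⟩
    · exact H.loopless.irrefl _ h2
    · exact G.loopless.irrefl _ h1
    · exact G.loopless.irrefl _ h1⟩

/-- The lexicographic product `G ∘ H`. -/
def LexProd {α β : Type*} (G : SimpleGraph α) (H : SimpleGraph β) : SimpleGraph (α × β) where
  Adj x y := G.Adj x.1 y.1 ∨ (x.1 = y.1 ∧ H.Adj x.2 y.2)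
  symm := ⟨fun x y h => by
    rcases h with h1 | ⟨h1, h2⟩
    · exact Or.inl h1.symm
    · exact Or.inr ⟨h1.symm, h2.symm⟩⟩
  loopless := ⟨fun x h => by
    rcases h with h1 | ⟨_, h2⟩
    · exact G.loopless.irrefl _ h1
    · exact H.loopless.irrefl _ h2⟩

section

variable {V W : Type*} {G : SimpleGraph V} {G' : SimpleGraph W}

theorem Positionable.comap {f : G' →g G} (hf : Function.Injective f) {X : Set V} {u v : W}
    (hdist : G.dist (f u) (f v) = G'.dist u v) (h : Positionable G X (f u) (f v)) :
    Positionable G' (f ⁻¹' X) u v := by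
  intro p hp w hw hwX
  have hp' : (p.map f).length = G.dist (f u) (f v) := by rw [Walk.length_map, hp, hdist]
  have hw' : f w ∈ (p.map f).support := by
    rw [Walk.support_map]
    exact List.mem_map_of_mem hw
  exact (h (p.map f) hp' (f w) hw' hwX).imp (fun h => hf h) (fun h => hf h)

theorem IsOuterGPSet.comap {f : G' →g G} (hf : Function.Injective f)
    (hdist : ∀ u v, G.dist (f u) (f v) = G'.dist u v) {X : Set V} (hX : IsOuterGPSet G X) :
    IsOuterGPSet G' (f ⁻¹' X) :=
  ⟨fun u hu v hv => (hX.1 _ hu _ hv).comap hf (hdist u v),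
    fun u hu v hv => (hX.2 _ hu _ hv).comap hf (hdist u v)⟩

end

theorem outerGPSet_inter_isometric_general {V : Type*} (G : SimpleGraph V)
    (H : G.Subgraph) (hiso : ∀ u v : H.verts, H.coe.dist u v = G.dist (u : V) (v : V))
    (X : Set V) (hX : IsOuterGPSet G X) :
    IsOuterGPSet H.coe {x : H.verts | (x : V) ∈ X} :=
  hX.comap H.hom_injective fun u v => (hiso u v).symm

/-- intersection of an outer general position set with an isometric subgraph. -/
theorem outerGPSet_inter_isometric {V : Type*} (G : SimpleGraph V) (hG : G.Connected)
    (H : G.Subgraph) (hiso : ∀ u v : H.verts, H.coe.dist u v = G.dist (u : V) (v : V))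
    (X : Set V) (hX : IsOuterGPSet G X) :
    IsOuterGPSet H.coe {x : H.verts | (x : V) ∈ X} :=
  outerGPSet_inter_isometric_general G H hiso X hX
end

section
/- If G and H are connected graphs of order at least 2, then gp_o(G ⊠ H) ≤ b(G)·b(H), where b denotes the number of boundary vertices (vertices that are mutually maximally distant with some vertex). -/
open SimpleGraph

/-! Two distinct vertices `u`, `x` of an outer general position set are mutually maximally
distant: otherwise `u` lies strictly inside a geodesic from `x` to a vertex maximally distant
from `x`. Distances in `G ⊠ H` are maxima of the coordinate distances, so an MMD pair of `G ⊠ H`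
projects, in a coordinate realising the maximum, to an MMD pair of distinct vertices of `G` or
of `H`. Hence replacing each coordinate outside the boundary by a fixed boundary vertex is
injective on an outer general position set of `G ⊠ H`, with values in `∂(G) × ∂(H)`. -/

/-- The boundary `∂(G)`. -/
def boundary {V : Type*} (G : SimpleGraph V) : Set V :=
  {u | ∃ v, MMD G u v}

lemma boundaryNum_eq_ncard_boundary {V : Type*} (G : SimpleGraph V) :
    boundaryNum G = (boundary G).ncard :=
  rfl

section Boundary

variable {V : Type*} {G : SimpleGraph V} {u v : V}

lemma MMD.symm (h : MMD G u v) : MMD G v u :=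
  ⟨h.2, h.1⟩

lemma MMD.left_mem_boundary (h : MMD G u v) : u ∈ boundary G :=
  ⟨v, h⟩

lemma MMD.right_mem_boundary (h : MMD G u v) : v ∈ boundary G :=
  ⟨u, h.symm⟩

lemma boundary_nonempty [Finite V] [Nonempty V] (G : SimpleGraph V) : (boundary G).Nonempty := by
  obtain ⟨⟨u, v⟩, -, hmax⟩ := Set.exists_max_image Set.univ (fun p : V × V => G.dist p.1 p.2)
    Set.finite_univ Set.univ_nonempty
  exact ⟨u, v, fun w _ => (hmax (v, w) trivial).trans_eq dist_comm, fun w _ => hmax (u, w) trivial⟩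

end Boundary

section OuterGP

variable {V : Type*} {G : SimpleGraph V}

lemma SimpleGraph.Connected.exists_walk_length_eq_dist_mem_support (hG : G.Connected) {x u v : V}
    (h : G.dist x v = G.dist x u + G.dist u v) :
    ∃ p : G.Walk x v, p.length = G.dist x v ∧ u ∈ p.support := by
  obtain ⟨p, hp⟩ := hG.exists_walk_length_eq_dist x u
  obtain ⟨q, hq⟩ := hG.exists_walk_length_eq_dist u v
  exact ⟨p.append q, by rw [Walk.length_append, hp, hq, h],
    (Walk.mem_support_append_iff p q).mpr (Or.inl p.end_mem_support)⟩

/-- Take `v` farthest from `x` among the vertices such that `u` lies on a geodesic from `x`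
to `v`. -/
lemma SimpleGraph.Connected.exists_maxDistant_beyond [Finite V] (hG : G.Connected) {u x : V}
    (hu : ¬ MaxDistant G u x) :
    ∃ v, u ≠ v ∧ MaxDistant G v x ∧ G.dist x v = G.dist x u + G.dist u v := by
  set S := {v | G.dist x v = G.dist x u + G.dist u v}
  obtain ⟨v, hvS, hmax⟩ := Set.exists_max_image S (G.dist x) (Set.toFinite S) ⟨u, by simp [S]⟩
  have hstep : ∀ {a b : V}, G.Adj a b → G.dist x a < G.dist x b →
      G.dist x b = G.dist x a + 1 ∧ G.dist u b ≤ G.dist u a + 1 := fun {a b} hab hlt => by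
    have := hG.dist_triangle (u := x) (v := a) (w := b)
    have := hG.dist_triangle (u := u) (v := a) (w := b)
    rw [dist_eq_one_iff_adj.mpr hab] at *
    omega
  simp only [MaxDistant, not_forall, not_le] at hu
  obtain ⟨w, huw, hw⟩ := hu
  have hwS : w ∈ S := by
    show G.dist x w = G.dist x u + G.dist u w
    rw [dist_eq_one_iff_adj.mpr huw]
    exact (hstep huw hw).1
  refine ⟨v, ?_, fun w' hvw' => ?_, hvS⟩
  · rintro rfl
    exact absurd (hmax w hwS) (not_le.mpr hw)
  · by_contra! hw'
    have hw'S : w' ∈ S := by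
      have := hstep hvw' hw'
      have := hG.dist_triangle (u := x) (v := u) (w := w')
      change G.dist x v = G.dist x u + G.dist u v at hvS
      show G.dist x w' = G.dist x u + G.dist u w'
      omega
    exact absurd (hmax w' hw'S) (not_le.mpr hw')

lemma IsOuterGPSet.positionable {X : Set V} (hX : IsOuterGPSet G X) {x : V} (hx : x ∈ X)
    (v : V) : Positionable G X x v := by
  by_cases hv : v ∈ X
  · exact hX.1 x hx v hv
  · exact hX.2 x hx v hv

lemma IsOuterGPSet.maxDistant [Finite V] (hG : G.Connected) {X : Set V} (hX : IsOuterGPSet G X)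
    {u x : V} (hu : u ∈ X) (hx : x ∈ X) (hne : u ≠ x) : MaxDistant G u x := by
  by_contra hmd
  obtain ⟨v, huv, -, hdist⟩ := hG.exists_maxDistant_beyond hmd
  obtain ⟨p, hp, hup⟩ := hG.exists_walk_length_eq_dist_mem_support hdist
  rcases hX.positionable hx v p hp u hup hu with h | h
  · exact hne h
  · exact huv h

lemma IsOuterGPSet.mmd [Finite V] (hG : G.Connected) {X : Set V} (hX : IsOuterGPSet G X)
    {u x : V} (hu : u ∈ X) (hx : x ∈ X) (hne : u ≠ x) : MMD G u x :=
  ⟨hX.maxDistant hG hu hx hne, hX.maxDistant hG hx hu hne.symm⟩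

end OuterGP

lemma SimpleGraph.Walk.dist_le_length_of_eq_or_adj {V W : Type*} {Γ : SimpleGraph V}
    {Δ : SimpleGraph W} (f : V → W) (hf : ∀ ⦃x y⦄, Γ.Adj x y → f x = f y ∨ Δ.Adj (f x) (f y))
    {u v : V} (r : Γ.Walk u v) : Δ.dist (f u) (f v) ≤ r.length := by
  suffices ∃ s : Δ.Walk (f u) (f v), s.length ≤ r.length from
    let ⟨s, hs⟩ := this; (dist_le s).trans hs
  induction r with
  | nil => exact ⟨.nil, le_rfl⟩
  | cons hxy r ih =>
    obtain ⟨s, hs⟩ := ih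
    rcases hf hxy with h | h
    · exact ⟨s.copy h.symm rfl, by simp only [Walk.length_copy, Walk.length_cons]; omega⟩
    · exact ⟨.cons h s, by simp only [Walk.length_cons]; omega⟩

namespace StrongProd

variable {α β : Type*} {G : SimpleGraph α} {H : SimpleGraph β}

lemma adj_of_left {a a' : α} (ha : G.Adj a a') (b : β) :
    (StrongProd G H).Adj (a, b) (a', b) :=
  Or.inr (Or.inl ⟨ha, rfl⟩)

lemma adj_of_right (a : α) {b b' : β} (hb : H.Adj b b') :
    (StrongProd G H).Adj (a, b) (a, b') :=
  Or.inl ⟨rfl, hb⟩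

lemma adj_of_adj_of_adj {a a' : α} {b b' : β} (ha : G.Adj a a') (hb : H.Adj b b') :
    (StrongProd G H).Adj (a, b) (a', b') :=
  Or.inr (Or.inr ⟨ha, hb⟩)

def inclRight (a : α) : H →g StrongProd G H where
  toFun b := (a, b)
  map_rel' hb := adj_of_right a hb

lemma exists_walk_length_le_max {a a' : α} (p : G.Walk a a') {b b' : β} (q : H.Walk b b') :
    ∃ r : (StrongProd G H).Walk (a, b) (a', b'), r.length ≤ max p.length q.length := by
  induction p generalizing b with
  | nil => exact ⟨q.map (inclRight _), (Walk.length_map _ q).le.trans (le_max_right _ _)⟩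
  | cons ha p ih =>
    cases q with
    | nil =>
      obtain ⟨r, hr⟩ := ih Walk.nil
      exact ⟨.cons (adj_of_left ha _) r, by simp only [Walk.length_cons, Walk.length_nil] at *; omega⟩
    | cons hb q =>
      obtain ⟨r, hr⟩ := ih q
      exact ⟨.cons (adj_of_adj_of_adj ha hb) r, by simp only [Walk.length_cons] at *; omega⟩

lemma fst_eq_or_adj {x y : α × β} (h : (StrongProd G H).Adj x y) : x.1 = y.1 ∨ G.Adj x.1 y.1 := by
  rcases h with h | h | h
  exacts [Or.inl h.1, Or.inr h.1, Or.inr h.1]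

lemma snd_eq_or_adj {x y : α × β} (h : (StrongProd G H).Adj x y) : x.2 = y.2 ∨ H.Adj x.2 y.2 := by
  rcases h with h | h | h
  exacts [Or.inr h.2, Or.inl h.2, Or.inr h.2]

lemma connected (hG : G.Connected) (hH : H.Connected) : (StrongProd G H).Connected := by
  have := hG.nonempty
  have := hH.nonempty
  refine Connected.mk fun x y => ?_
  obtain ⟨r, -⟩ := exists_walk_length_le_max (hG x.1 y.1).some (hH x.2 y.2).some
  exact ⟨r⟩

lemma dist_eq (hG : G.Connected) (hH : H.Connected) (x y : α × β) :
    (StrongProd G H).dist x y = max (G.dist x.1 y.1) (H.dist x.2 y.2) := by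
  refine le_antisymm ?_ ?_
  · obtain ⟨p, hp⟩ := hG.exists_walk_length_eq_dist x.1 y.1
    obtain ⟨q, hq⟩ := hH.exists_walk_length_eq_dist x.2 y.2
    obtain ⟨r, hr⟩ := exists_walk_length_le_max p q
    exact hp ▸ hq ▸ (dist_le r).trans hr
  · obtain ⟨r, hr⟩ := (connected hG hH).exists_walk_length_eq_dist x y
    exact hr ▸ max_le (r.dist_le_length_of_eq_or_adj Prod.fst fun _ _ => fst_eq_or_adj)
      (r.dist_le_length_of_eq_or_adj Prod.snd fun _ _ => snd_eq_or_adj)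

lemma maxDistant_fst (hG : G.Connected) (hH : H.Connected) {x y : α × β}
    (hxy : MaxDistant (StrongProd G H) x y) (hle : H.dist y.2 x.2 ≤ G.dist y.1 x.1) :
    MaxDistant G x.1 y.1 := by
  intro a ha
  have h := hxy (a, x.2) (adj_of_left ha _)
  rw [dist_eq hG hH, dist_eq hG hH] at h
  exact (le_max_left _ _).trans (h.trans_eq (max_eq_left hle))

lemma maxDistant_snd (hG : G.Connected) (hH : H.Connected) {x y : α × β}
    (hxy : MaxDistant (StrongProd G H) x y) (hle : G.dist y.1 x.1 ≤ H.dist y.2 x.2) :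
    MaxDistant H x.2 y.2 := by
  intro b hb
  have h := hxy (x.1, b) (adj_of_right _ hb)
  rw [dist_eq hG hH, dist_eq hG hH] at h
  exact (le_max_right _ _).trans (h.trans_eq (max_eq_right hle))

end StrongProd

section MMD

variable {α β : Type*} {G : SimpleGraph α} {H : SimpleGraph β}

lemma MMD.strongProd_fst (hG : G.Connected) (hH : H.Connected) {x y : α × β}
    (hxy : MMD (StrongProd G H) x y) (hne : x ≠ y) (hle : H.dist x.2 y.2 ≤ G.dist x.1 y.1) :
    x.1 ≠ y.1 ∧ MMD G x.1 y.1 := by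
  refine ⟨fun h => hne (Prod.ext h ?_),
    StrongProd.maxDistant_fst hG hH hxy.1 (by rwa [dist_comm, dist_comm (G := G)]),
    StrongProd.maxDistant_fst hG hH hxy.2 hle⟩
  rw [h, dist_self, Nat.le_zero, hH.dist_eq_zero_iff] at hle
  exact hle

lemma MMD.strongProd_snd (hG : G.Connected) (hH : H.Connected) {x y : α × β}
    (hxy : MMD (StrongProd G H) x y) (hne : x ≠ y) (hle : G.dist x.1 y.1 ≤ H.dist x.2 y.2) :
    x.2 ≠ y.2 ∧ MMD H x.2 y.2 := by
  refine ⟨fun h => hne (Prod.ext ?_ h),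
    StrongProd.maxDistant_snd hG hH hxy.1 (by rwa [dist_comm, dist_comm (G := H)]),
    StrongProd.maxDistant_snd hG hH hxy.2 hle⟩
  rw [h, dist_self, Nat.le_zero, hG.dist_eq_zero_iff] at hle
  exact hle

end MMD

lemma Set.ncard_le_ncard_mul_ncard_of_pairwise {α β : Type*} {A : Set α} {B : Set β}
    (hA : A.Finite) (hB : B.Finite) (hA₀ : A.Nonempty) (hB₀ : B.Nonempty) {X : Set (α × β)}
    (hX : X.Pairwise fun u x => (u.1 ∈ A ∧ x.1 ∈ A ∧ u.1 ≠ x.1) ∨ (u.2 ∈ B ∧ x.2 ∈ B ∧ u.2 ≠ x.2)) :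
    X.ncard ≤ A.ncard * B.ncard := by
  classical
  obtain ⟨a₀, ha₀⟩ := hA₀
  obtain ⟨b₀, hb₀⟩ := hB₀
  let f : α × β → α × β := fun u => (if u.1 ∈ A then u.1 else a₀, if u.2 ∈ B then u.2 else b₀)
  rw [← Set.ncard_prod]
  refine Set.ncard_le_ncard_of_injOn f (fun u _ => ⟨?_, ?_⟩) (fun u hu x hx hfux => ?_)
    (hA.prod hB)
  · dsimp only [f]; split_ifs <;> assumption
  · dsimp only [f]; split_ifs <;> assumption
  by_contra hne
  rcases hX hu hx hne with ⟨hu₁, hx₁, h₁⟩ | ⟨hu₂, hx₂, h₂⟩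
  · exact h₁ (by simpa [f, hu₁, hx₁] using congrArg Prod.fst hfux)
  · exact h₂ (by simpa [f, hu₂, hx₂] using congrArg Prod.snd hfux)

theorem gpo_strongProd_upper_general {α β : Type*} [Fintype α] [Fintype β]
    (G : SimpleGraph α) (H : SimpleGraph β) (hG : G.Connected) (hH : H.Connected) :
    gpo (StrongProd G H) ≤ boundaryNum G * boundaryNum H := by
  have := hG.nonempty
  have := hH.nonempty
  rw [boundaryNum_eq_ncard_boundary, boundaryNum_eq_ncard_boundary]
  refine csSup_le' ?_
  rintro _ ⟨X, hX, rfl⟩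
  refine Set.ncard_le_ncard_mul_ncard_of_pairwise (Set.toFinite _) (Set.toFinite _)
    (boundary_nonempty G) (boundary_nonempty H) fun u hu x hx hne => ?_
  have hmmd := hX.mmd (StrongProd.connected hG hH) hu hx hne
  rcases le_total (H.dist u.2 x.2) (G.dist u.1 x.1) with hle | hle
  · obtain ⟨hne₁, hmmd₁⟩ := hmmd.strongProd_fst hG hH hne hle
    exact Or.inl ⟨hmmd₁.left_mem_boundary, hmmd₁.right_mem_boundary, hne₁⟩
  · obtain ⟨hne₂, hmmd₂⟩ := hmmd.strongProd_snd hG hH hne hle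
    exact Or.inr ⟨hmmd₂.left_mem_boundary, hmmd₂.right_mem_boundary, hne₂⟩

/-- gp_o(G ⊠ H) ≤ b(G)·b(H). -/
theorem gpo_strongProd_upper {α β : Type*} [Fintype α] [Fintype β]
    (G : SimpleGraph α) (H : SimpleGraph β) (hG : G.Connected) (hH : H.Connected)
    (h2G : 2 ≤ Fintype.card α) (h2H : 2 ≤ Fintype.card β) :
    gpo (StrongProd G H) ≤ boundaryNum G * boundaryNum H :=
  gpo_strongProd_upper_general G H hG hH
end

section
/- Let G be a connected graph with no simplicial vertex and H a graph with no simplicial vertex. Then gp_d(G∘H) = 0, i.e., the only dual general position set of G∘H is the empty set. -/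
open SimpleGraph

/-!
A non-simplicial vertex `m` is the centre of an induced path `x - m - y`, which is a shortest
`x,y`-path. So if a dual general position set `X` contains `m`, it contains exactly one of `x`
and `y`. In `G ∘ H`, pick `(g, h) ∈ X` and an induced path `a - g - b` in `G`: every
`(a, s) - (g, h) - (b, t)` is an induced path, so the fibres over `a` and `b` are each entirely
inside or entirely outside `X`, and one of them lies inside. But a fibre `{c} × V(H)` inside `X`
contains the whole induced path `(c, x) - (c, h) - (c, y)` coming from `H`, a contradiction.
-/

def IsInducedP3 {V : Type*} (G : SimpleGraph V) (x m y : V) : Prop :=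
  G.Adj x m ∧ G.Adj m y ∧ x ≠ y ∧ ¬ G.Adj x y

lemma exists_isInducedP3_of_not_isSimplicial {V : Type*} {G : SimpleGraph V} {m : V}
    (h : ¬ IsSimplicial G m) : ∃ x y, IsInducedP3 G x m y := by
  simp only [IsSimplicial, closedNbhd, Set.mem_insert_iff, mem_neighborSet, not_forall] at h
  obtain ⟨x, hx, y, hy, hxy, hnadj⟩ := h
  rcases hx with rfl | hx <;> rcases hy with rfl | hy
  · exact absurd rfl hxy
  · exact absurd hy hnadj
  · exact absurd hx.symm hnadj
  · exact ⟨x, y, hx.symm, hy, hxy, hnadj⟩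

namespace IsInducedP3

variable {V : Type*} {G : SimpleGraph V} {x m y : V}

lemma dist_eq_two (hp : IsInducedP3 G x m y) : G.dist x y = 2 := by
  obtain ⟨hxm, hmy, hxy, hnadj⟩ := hp
  rw [SimpleGraph.dist, edist_eq_two_iff.mpr ⟨hxy, hnadj, m, hxm, hmy.symm⟩]
  rfl

def walk (hp : IsInducedP3 G x m y) : G.Walk x y :=
  .cons hp.1 (.cons hp.2.1 .nil)

lemma mem_iff_notMem_of_isDualGPSet {X : Set V} (hX : IsDualGPSet G X)
    (hp : IsInducedP3 G x m y) (hm : m ∈ X) : x ∈ X ↔ y ∉ X := by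
  have hcenter : ¬ Positionable G X x y := fun hpos => by
    rcases hpos hp.walk (by simp [walk, hp.dist_eq_two]) m (by simp [walk]) hm with rfl | rfl
    · exact G.loopless.irrefl _ hp.1
    · exact G.loopless.irrefl _ hp.2.1
  by_cases hx : x ∈ X <;> by_cases hy : y ∈ X
  · exact absurd (hX.1 x hx y hy) hcenter
  · simp [hx, hy]
  · simp [hx, hy]
  · exact absurd (hX.2 x hx y hy) hcenter

end IsInducedP3

section LexProd

variable {α β : Type*} {G : SimpleGraph α} {H : SimpleGraph β}

@[simp]
lemma lexProd_adj {p q : α × β} :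
    (LexProd G H).Adj p q ↔ G.Adj p.1 q.1 ∨ (p.1 = q.1 ∧ H.Adj p.2 q.2) :=
  Iff.rfl

lemma IsInducedP3.lexProd_left {a g b : α} (hp : IsInducedP3 G a g b) (s t u : β) :
    IsInducedP3 (LexProd G H) (a, s) (g, t) (b, u) := by
  obtain ⟨hag, hgb, hab, hnadj⟩ := hp
  refine ⟨.inl hag, .inl hgb, fun heq => hab (congrArg Prod.fst heq), ?_⟩
  simp [hnadj, hab]

lemma IsInducedP3.lexProd_right {x h y : β} (hp : IsInducedP3 H x h y) (c : α) :
    IsInducedP3 (LexProd G H) (c, x) (c, h) (c, y) := by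
  obtain ⟨hxh, hhy, hxy, hnadj⟩ := hp
  refine ⟨.inr ⟨rfl, hxh⟩, .inr ⟨rfl, hhy⟩, fun heq => hxy (congrArg Prod.snd heq), ?_⟩
  simp [hnadj]

lemma not_forall_mem_fiber_of_isDualGPSet (hsH : ∀ h : β, ¬ IsSimplicial H h) [Nonempty β]
    {X : Set (α × β)} (hX : IsDualGPSet (LexProd G H) X) (c : α) : ¬ ∀ t, (c, t) ∈ X := by
  intro hc
  obtain ⟨x, y, hp⟩ := exists_isInducedP3_of_not_isSimplicial (hsH (Classical.arbitrary β))
  exact ((hp.lexProd_right c).mem_iff_notMem_of_isDualGPSet hX (hc _)).mp (hc x) (hc y)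

lemma eq_empty_of_isDualGPSet_lexProd (hsG : ∀ g : α, ¬ IsSimplicial G g)
    (hsH : ∀ h : β, ¬ IsSimplicial H h) {X : Set (α × β)}
    (hX : IsDualGPSet (LexProd G H) X) : X = ∅ := by
  refine Set.eq_empty_of_forall_notMem fun ⟨g, h⟩ hgh => ?_
  have : Nonempty β := ⟨h⟩
  obtain ⟨a, b, hp⟩ := exists_isInducedP3_of_not_isSimplicial (hsG g)
  have hsplit : ∀ s t, (a, s) ∈ X ↔ (b, t) ∉ X := fun s t =>
    (hp.lexProd_left s h t).mem_iff_notMem_of_isDualGPSet hX hgh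
  by_cases ha : (a, h) ∈ X
  · exact not_forall_mem_fiber_of_isDualGPSet hsH hX a fun s =>
      (hsplit s h).mpr ((hsplit h h).mp ha)
  · exact not_forall_mem_fiber_of_isDualGPSet hsH hX b fun t =>
      not_not.mp (mt (hsplit h t).mpr ha)

end LexProd

lemma isDualGPSet_empty {V : Type*} (G : SimpleGraph V) : IsDualGPSet G ∅ :=
  ⟨fun _ hu => hu.elim, fun _ _ _ _ _ _ _ _ hw => hw.elim⟩

lemma gpd_eq_zero_of_forall_isDualGPSet_eq_empty {V : Type*} {G : SimpleGraph V}
    (h : ∀ X, IsDualGPSet G X → X = ∅) : gpd G = 0 := by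
  have hcard : {n | ∃ X : Set V, IsDualGPSet G X ∧ X.ncard = n} = {0} := by
    ext n
    refine ⟨fun ⟨X, hX, hn⟩ => by simp [← hn, h X hX], fun hn => ⟨∅, isDualGPSet_empty G, ?_⟩⟩
    simp [Set.mem_singleton_iff.mp hn]
  rw [gpd, hcard, csSup_singleton]

theorem gpd_lexProd_zero_general {α β : Type*}
    (G : SimpleGraph α) (H : SimpleGraph β)
    (hsG : ∀ u : α, ¬ IsSimplicial G u) (hsH : ∀ u : β, ¬ IsSimplicial H u) :
    gpd (LexProd G H) = 0 ∧
    ∀ X : Set (α × β), IsDualGPSet (LexProd G H) X → X = ∅ :=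
  have hempty := fun X => eq_empty_of_isDualGPSet_lexProd (X := X) hsG hsH
  ⟨gpd_eq_zero_of_forall_isDualGPSet_eq_empty hempty, hempty⟩

/-- if G and H have no simplicial vertices (G connected), then
gp_d(G ∘ H) = 0 and the only dual general position set of G ∘ H is ∅. -/
theorem gpd_lexProd_zero {α β : Type*} [Fintype α] [Fintype β]
    (G : SimpleGraph α) (H : SimpleGraph β) (hG : G.Connected)
    (hsG : ∀ u : α, ¬ IsSimplicial G u) (hsH : ∀ u : β, ¬ IsSimplicial H u) :
    gpd (LexProd G H) = 0 ∧
    ∀ X : Set (α × β), IsDualGPSet (LexProd G H) X → X = ∅ :=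
  gpd_lexProd_zero_general G H hsG hsH
end
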